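/- arXiv:0902.2771 — 2 statements merged into one kernel-verified Lean document; each statement's English description precedes it below -/
import Mathlib

section
/- Within the set of symmetric bimatrix games with a fixed finite strategy set T, the set of games having a unique symmetric Nash equilibrium such that this symmetric Nash equilibrium is a strict equilibrium is open (in the topology on symmetric games induced by identification with ℝ^{|T|×|T|}). -/
/-- The Dirac (pure) mixed strategy concentrated on `a`. -/
def pureStrat {k : ℕ} (a : Fin k) : Fin k → ℝ := fun b => if b = a then 1 else 0

/-- A mixed strategy: a probability distribution on the strategy set. -/
def IsMixed {k : ℕ} (x : Fin k → ℝ) : Prop := (∀ a, 0 ≤ x a) ∧ ∑ a, x a = 1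

/-- Bilinear payoff: the expected payoff `∑ₐ ∑_b x a * y b * A a b` to a player with payoff
matrix `A` when the row strategy is `x` and the column strategy is `y`. -/
def pay {k : ℕ} (A : Fin k → Fin k → ℝ) (x y : Fin k → ℝ) : ℝ :=
  ∑ a, ∑ b, x a * y b * A a b

/-- `σ` is a symmetric Nash equilibrium of the symmetric bimatrix game with row-player
payoff matrix `A` (the column player having matrix `Aᵀ`): `(σ, σ)` is a Nash equilibrium,
i.e. no pure deviation of either player is profitable. -/
def IsSymNash {k : ℕ} (A : Fin k → Fin k → ℝ) (σ : Fin k → ℝ) : Prop :=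
  IsMixed σ ∧ (∀ a, pay A (pureStrat a) σ ≤ pay A σ σ) ∧
    (∀ b, pay (fun s t => A t s) σ (pureStrat b) ≤ pay (fun s t => A t s) σ σ)

/-- The symmetric equilibrium `(σ, σ)` is quasi-strict: for each player, every pure best
response to the opponent's strategy `σ` lies in the support of `σ`. -/
def SymQuasiStrict {k : ℕ} (A : Fin k → Fin k → ℝ) (σ : Fin k → ℝ) : Prop :=
  (∀ a, (∀ b, pay A (pureStrat b) σ ≤ pay A (pureStrat a) σ) → 0 < σ a) ∧
  (∀ a, (∀ b, pay (fun s t => A t s) σ (pureStrat b) ≤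
      pay (fun s t => A t s) σ (pureStrat a)) → 0 < σ a)

/-- The symmetric profile `(σ, σ)` is a strict equilibrium: `σ` is a pure strategy `a` and,
for each player, `a` is the unique best response to the opponent playing `a`
(for both players this reads `A b a < A a a` for all `b ≠ a`). -/
def SymStrict {k : ℕ} (A : Fin k → Fin k → ℝ) (σ : Fin k → ℝ) : Prop :=
  ∃ a : Fin k, σ = pureStrat a ∧ ∀ b : Fin k, b ≠ a → A b a < A a a

lemma continuous_pay {k : ℕ} :
    Continuous (fun p : ((Fin k → Fin k → ℝ) × (Fin k → ℝ) × (Fin k → ℝ)) =>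
      pay p.1 p.2.1 p.2.2) := by
  unfold pay; fun_prop

lemma pay_pure_left {k : ℕ} (A : Fin k → Fin k → ℝ) (b : Fin k) (y : Fin k → ℝ) :
    pay A (pureStrat b) y = ∑ c, y c * A b c := by
  unfold pay pureStrat
  rw [Finset.sum_eq_single b]
  · simp
  · intro c _ hc; simp [hc]
  · simp

lemma pay_pure_pure {k : ℕ} (A : Fin k → Fin k → ℝ) (b c : Fin k) :
    pay A (pureStrat b) (pureStrat c) = A b c := by
  rw [pay_pure_left]
  unfold pureStrat
  rw [Finset.sum_eq_single c] <;> simp +contextual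

lemma pay_decomp {k : ℕ} (A : Fin k → Fin k → ℝ) (x y : Fin k → ℝ) :
    pay A x y = ∑ b, x b * pay A (pureStrat b) y := by
  simp only [pay_pure_left, Finset.mul_sum]
  unfold pay
  refine Finset.sum_congr rfl fun b _ => Finset.sum_congr rfl fun c _ => by ring

lemma contPay1 {k : ℕ} (x : Fin k → ℝ) :
    Continuous fun p : (Fin k → Fin k → ℝ) × (Fin k → ℝ) => pay p.1 x p.2 := by
  unfold pay; fun_prop

lemma contPay2 {k : ℕ} :
    Continuous fun p : (Fin k → Fin k → ℝ) × (Fin k → ℝ) => pay p.1 p.2 p.2 := by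
  unfold pay; fun_prop

lemma contPay3 {k : ℕ} (x : Fin k → ℝ) :
    Continuous fun p : (Fin k → Fin k → ℝ) × (Fin k → ℝ) =>
      pay (fun s t => p.1 t s) p.2 x := by
  unfold pay; fun_prop

lemma contPay4 {k : ℕ} :
    Continuous fun p : (Fin k → Fin k → ℝ) × (Fin k → ℝ) =>
      pay (fun s t => p.1 t s) p.2 p.2 := by
  unfold pay; fun_prop

lemma pure_isMixed {k : ℕ} (a : Fin k) : IsMixed (pureStrat a) := by
  constructor
  · intro b; unfold pureStrat; positivity
  · unfold pureStrat
    rw [Finset.sum_eq_single a] <;> simp +contextual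

/-- Closedness of the symmetric-Nash correspondence graph. -/
lemma isClosed_nashGraph {k : ℕ} :
    IsClosed {p : (Fin k → Fin k → ℝ) × (Fin k → ℝ) | IsSymNash p.1 p.2} := by
  simp only [IsSymNash, IsMixed, Set.setOf_and, Set.setOf_forall]
  refine IsClosed.inter (IsClosed.inter ?_ ?_) (IsClosed.inter ?_ ?_)
  · exact isClosed_iInter fun b => isClosed_le continuous_const ((continuous_apply b).comp continuous_snd)
  · exact isClosed_eq (by fun_prop) continuous_const
  · exact isClosed_iInter fun b => isClosed_le (contPay1 (pureStrat b)) contPay2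
  · exact isClosed_iInter fun b => isClosed_le (contPay3 (pureStrat b)) contPay4

/-- within the set of symmetric bimatrix games with strategy set `Fin k`
(identified with `ℝ^(k × k)`), the set of games having a unique symmetric Nash equilibrium,
this equilibrium moreover being a strict equilibrium, is open. -/
theorem statement9 (k : ℕ) (hk : 0 < k) :
    IsOpen {A : Fin k → Fin k → ℝ | ∃ σ : Fin k → ℝ,
      IsSymNash A σ ∧ (∀ τ, IsSymNash A τ → τ = σ) ∧ SymStrict A σ} := by
  rw [isOpen_iff_forall_mem_open]
  rintro A ⟨σ, hNash, hUniq, a, rfl, hStrict⟩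
  -- the open set W of pairs (A', τ) where a is strictly better than any b ≠ a against τ
  set W : Set ((Fin k → Fin k → ℝ) × (Fin k → ℝ)) :=
    {p | ∀ b ∈ Finset.univ.erase a, pay p.1 (pureStrat b) p.2 < pay p.1 (pureStrat a) p.2}
    with hWdef
  have hWopen : IsOpen W := by
    have : W = ⋂ b ∈ Finset.univ.erase a,
        {p : (Fin k → Fin k → ℝ) × (Fin k → ℝ) |
          pay p.1 (pureStrat b) p.2 < pay p.1 (pureStrat a) p.2} := by
      ext p; simp [hWdef]
    rw [this]
    exact isOpen_biInter_finset fun b _ => isOpen_lt (contPay1 _) (contPay1 _)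
  -- (A, pureStrat a) ∈ W
  have hAW : (A, pureStrat a) ∈ W := by
    intro b hb
    rw [pay_pure_pure, pay_pure_pure]
    exact hStrict b (Finset.ne_of_mem_erase hb)
  -- extract a basic product neighborhood V × O ⊆ W
  obtain ⟨V, O, hVopen, hOopen, hAV, haO, hVO⟩ := isOpen_prod_iff.mp hWopen A (pureStrat a) hAW
  obtain ⟨δ, hδpos, hball⟩ := Metric.isOpen_iff.mp hOopen (pureStrat a) haO
  -- compact set of mixed strategies δ-far from pureStrat a
  set Δ : Set (Fin k → ℝ) := {τ | IsMixed τ ∧ δ ≤ dist τ (pureStrat a)} with hΔdef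
  have hΔcompact : IsCompact Δ := by
    have hsub : Δ ⊆ Set.pi Set.univ fun _ : Fin k => Set.Icc (0 : ℝ) 1 := by
      rintro τ ⟨⟨hpos, hsum⟩, -⟩ b -
      refine ⟨hpos b, ?_⟩
      calc τ b ≤ ∑ c, τ c := Finset.single_le_sum (fun c _ => hpos c) (Finset.mem_univ b)
        _ = 1 := hsum
    have hclosed : IsClosed Δ := by
      simp only [hΔdef, IsMixed, Set.setOf_and, Set.setOf_forall]
      refine IsClosed.inter (IsClosed.inter ?_ ?_) ?_
      · exact isClosed_iInter fun b => isClosed_le continuous_const (continuous_apply b)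
      · exact isClosed_eq (by fun_prop) continuous_const
      · exact isClosed_le continuous_const (continuous_id.dist continuous_const)
    exact (isCompact_univ_pi fun _ => isCompact_Icc).of_isClosed_subset hclosed hsub
  haveI : CompactSpace Δ := isCompact_iff_compactSpace.mp hΔcompact
  -- bad set: games with a symmetric Nash in Δ; it is closed
  set B : Set (Fin k → Fin k → ℝ) :=
    Prod.fst '' {p : (Fin k → Fin k → ℝ) × Δ | IsSymNash p.1 p.2.1} with hBdef
  have hBclosed : IsClosed B := by
    refine isClosedMap_fst_of_compactSpace _ ?_
    exact isClosed_nashGraph.preimage (continuous_fst.prodMk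
      (continuous_subtype_val.comp continuous_snd))
  refine ⟨V ∩ Bᶜ, ?_, hVopen.inter hBclosed.isOpen_compl, hAV, ?_⟩
  · -- V ∩ Bᶜ is contained in the target set
    rintro A' ⟨hA'V, hA'B⟩
    -- every symmetric Nash of A' is pureStrat a
    have key : ∀ τ, IsSymNash A' τ → τ = pureStrat a := by
      intro τ hτ
      have hdist : dist τ (pureStrat a) < δ := by
        by_contra h
        exact hA'B ⟨(A', ⟨τ, hτ.1, le_of_not_gt h⟩), hτ, rfl⟩
      have hτW : (A', τ) ∈ W := hVO (Set.mk_mem_prod hA'V (hball hdist))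
      -- support of τ is {a}
      have hzero : ∀ b, b ≠ a → τ b = 0 := by
        intro b hb
        by_contra hτb
        have hτbpos : 0 < τ b := lt_of_le_of_ne (hτ.1.1 b) (Ne.symm hτb)
        have hlt : pay A' τ τ < pay A' (pureStrat a) τ := by
          rw [pay_decomp]
          calc ∑ c, τ c * pay A' (pureStrat c) τ
              < ∑ c, τ c * pay A' (pureStrat a) τ := by
                refine Finset.sum_lt_sum (fun c _ => ?_) ⟨b, Finset.mem_univ b, ?_⟩
                · rcases eq_or_ne c a with rfl | hc
                  · exact le_rfl
                  · exact mul_le_mul_of_nonneg_left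
                      (hτW c (Finset.mem_erase.mpr ⟨hc, Finset.mem_univ c⟩)).le (hτ.1.1 c)
                · exact mul_lt_mul_of_pos_left
                    (hτW b (Finset.mem_erase.mpr ⟨hb, Finset.mem_univ b⟩)) hτbpos
            _ = (∑ c, τ c) * pay A' (pureStrat a) τ := by rw [Finset.sum_mul]
            _ = pay A' (pureStrat a) τ := by rw [hτ.1.2, one_mul]
        exact absurd (hτ.2.1 a) (not_le.mpr hlt)
      have hτa : τ a = 1 := by
        have := hτ.1.2
        rwa [Finset.sum_eq_single a (fun c _ hc => hzero c hc) (by simp)] at this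
      funext c
      unfold pureStrat
      rcases eq_or_ne c a with rfl | hc
      · simp [hτa]
      · simp [hc, hzero c hc]
    -- strictness for A'
    have hstrict' : ∀ b, b ≠ a → A' b a < A' a a := by
      intro b hb
      have : (A', pureStrat a) ∈ W := hVO (Set.mk_mem_prod hA'V haO)
      have := this b (Finset.mem_erase.mpr ⟨hb, Finset.mem_univ b⟩)
      rwa [pay_pure_pure, pay_pure_pure] at this
    have hle : ∀ b, A' b a ≤ A' a a := by
      intro b
      rcases eq_or_ne b a with rfl | hb
      · exact le_rfl
      · exact (hstrict' b hb).le
    -- pureStrat a is a symmetric Nash of A'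
    have hnash' : IsSymNash A' (pureStrat a) := by
      refine ⟨pure_isMixed a, fun b => ?_, fun b => ?_⟩
      · rw [pay_pure_pure, pay_pure_pure]; exact hle b
      · rw [pay_pure_pure, pay_pure_pure]; exact hle b
    exact ⟨pureStrat a, hnash', key, a, rfl, hstrict'⟩
  · -- A itself avoids B
    intro hAB
    obtain ⟨⟨A₀, τ, hτmixed, hτfar⟩, hτnash, rfl⟩ := hAB
    have : τ = pureStrat a := hUniq τ hτnash
    rw [this, dist_self] at hτfar
    exact absurd hτfar (not_le.mpr hδpos)
end

section
/- Within the set of symmetric bimatrix games with strategy set T = {1,2,3}, the set of games having a unique symmetric Nash equilibrium is not open. A witness is the family of symmetric games with row-player payoff matrix A_ε = [[−ε, 1, 1], [0, 0, −1], [0, −1, 0]] (column player's matrix A_εᵀ): for ε = 0 the game has a unique symmetric Nash equilibrium, the pure strategy 1, while for every ε > 0 the game has at least three symmetric Nash equilibria, given by the mixed strategies (1/(1+ε), ε/(1+ε), 0), (1/(1+ε), 0, ε/(1+ε)) and (3/(3+2ε), ε/(3+2ε), ε/(3+2ε)). -/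
/-- The row-player payoff matrix `A_ε = [[−ε, 1, 1], [0, 0, −1], [0, −1, 0]]` of the
witness family of symmetric bimatrix games. -/
noncomputable def Afam (ε : ℝ) : Fin 3 → Fin 3 → ℝ :=
  ![![-ε, 1, 1], ![0, 0, -1], ![0, -1, 0]]


section Statement14Aux

private lemma pay_tr' {k : ℕ} (A : Fin k → Fin k → ℝ) (x y : Fin k → ℝ) :
    pay (fun s t => A t s) x y = pay A y x := by
  unfold pay
  rw [Finset.sum_comm]
  exact Finset.sum_congr rfl fun a _ => Finset.sum_congr rfl fun b _ => by ring

private lemma symNash_of' {k : ℕ} (A : Fin k → Fin k → ℝ) (σ : Fin k → ℝ) (hm : IsMixed σ)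
    (h : ∀ a, pay A (pureStrat a) σ ≤ pay A σ σ) : IsSymNash A σ :=
  ⟨hm, h, fun b => by rw [pay_tr' A σ (pureStrat b), pay_tr' A σ σ]; exact h b⟩

private lemma contA' : Continuous fun ε : ℝ => Afam ε := by
  apply continuous_pi; intro i; apply continuous_pi; intro j
  fin_cases i <;> fin_cases j <;> simp [Afam] <;> fun_prop

private lemma part2' (σ : Fin 3 → ℝ) : IsSymNash (Afam 0) σ ↔ σ = pureStrat 0 := by
  constructor
  · rintro ⟨⟨hnn, hsum⟩, hrow, -⟩
    have h0 := hrow 0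
    simp [pay, pureStrat, Afam, Fin.sum_univ_three] at h0
    simp [Fin.sum_univ_three] at hsum
    have h1 := hnn 1; have h2 := hnn 2
    have e1 : σ 1 = 0 := by nlinarith [sq_nonneg (σ 1 + σ 2)]
    have e2 : σ 2 = 0 := by nlinarith [sq_nonneg (σ 1 + σ 2)]
    funext i; fin_cases i <;> simp [pureStrat] <;> linarith
  · rintro rfl
    refine ⟨⟨fun a => by fin_cases a <;> simp [pureStrat],
      by simp [pureStrat, Fin.sum_univ_three]⟩, ?_, ?_⟩ <;>
      (intro a; fin_cases a <;> simp [pay, pureStrat, Afam, Fin.sum_univ_three])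

private lemma nash1' (ε : ℝ) (hε : 0 < ε) : IsSymNash (Afam ε) ![1/(1+ε), ε/(1+ε), 0] := by
  have hp : (0:ℝ) < 1 + ε := by linarith
  set v : Fin 3 → ℝ := ![1/(1+ε), ε/(1+ε), 0] with hv
  have hV : pay (Afam ε) v v = 0 := by
    simp [pay, Afam, hv, Fin.sum_univ_three, Matrix.vecHead, Matrix.vecTail]; ring_nf
  have h0 : pay (Afam ε) (pureStrat 0) v = 0 := by
    simp [pay, pureStrat, Afam, hv, Fin.sum_univ_three, Matrix.vecHead, Matrix.vecTail]; ring_nf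
  have h1 : pay (Afam ε) (pureStrat 1) v = 0 := by
    simp [pay, pureStrat, Afam, hv, Fin.sum_univ_three, Matrix.vecHead, Matrix.vecTail]
  have h2 : pay (Afam ε) (pureStrat 2) v = -(ε/(1+ε)) := by
    simp [pay, pureStrat, Afam, hv, Fin.sum_univ_three, Matrix.vecHead, Matrix.vecTail]
  refine symNash_of' _ _ ⟨fun a => by fin_cases a <;> simp [hv] <;> positivity,
    by simp [hv, Fin.sum_univ_three]; field_simp⟩ fun a => ?_
  fin_cases a
  · exact le_of_eq (h0.trans hV.symm)
  · exact le_of_eq (h1.trans hV.symm)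
  · refine le_trans (le_of_eq h2) ?_
    rw [hV, neg_nonpos]; positivity

private lemma nash2' (ε : ℝ) (hε : 0 < ε) : IsSymNash (Afam ε) ![1/(1+ε), 0, ε/(1+ε)] := by
  have hp : (0:ℝ) < 1 + ε := by linarith
  set v : Fin 3 → ℝ := ![1/(1+ε), 0, ε/(1+ε)] with hv
  have hV : pay (Afam ε) v v = 0 := by
    simp [pay, Afam, hv, Fin.sum_univ_three, Matrix.vecHead, Matrix.vecTail]; ring_nf
  have h0 : pay (Afam ε) (pureStrat 0) v = 0 := by
    simp [pay, pureStrat, Afam, hv, Fin.sum_univ_three, Matrix.vecHead, Matrix.vecTail]; ring_nf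
  have h1 : pay (Afam ε) (pureStrat 1) v = -(ε/(1+ε)) := by
    simp [pay, pureStrat, Afam, hv, Fin.sum_univ_three, Matrix.vecHead, Matrix.vecTail]
  have h2 : pay (Afam ε) (pureStrat 2) v = 0 := by
    simp [pay, pureStrat, Afam, hv, Fin.sum_univ_three, Matrix.vecHead, Matrix.vecTail]
  refine symNash_of' _ _ ⟨fun a => by fin_cases a <;> simp [hv] <;> positivity,
    by simp [hv, Fin.sum_univ_three]; field_simp⟩ fun a => ?_
  fin_cases a
  · exact le_of_eq (h0.trans hV.symm)
  · refine le_trans (le_of_eq h1) ?_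
    rw [hV, neg_nonpos]; positivity
  · exact le_of_eq (h2.trans hV.symm)

private lemma nash3' (ε : ℝ) (hε : 0 < ε) :
    IsSymNash (Afam ε) ![3/(3+2*ε), ε/(3+2*ε), ε/(3+2*ε)] := by
  have hp : (0:ℝ) < 3 + 2*ε := by linarith
  set v : Fin 3 → ℝ := ![3/(3+2*ε), ε/(3+2*ε), ε/(3+2*ε)] with hv
  have hV : pay (Afam ε) v v = -ε/(3+2*ε) := by
    simp [pay, Afam, hv, Fin.sum_univ_three, Matrix.vecHead, Matrix.vecTail]; field_simp; ring
  have h0 : pay (Afam ε) (pureStrat 0) v = -ε/(3+2*ε) := by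
    simp [pay, pureStrat, Afam, hv, Fin.sum_univ_three, Matrix.vecHead, Matrix.vecTail]
    field_simp; ring
  have h1 : pay (Afam ε) (pureStrat 1) v = -ε/(3+2*ε) := by
    simp [pay, pureStrat, Afam, hv, Fin.sum_univ_three, Matrix.vecHead, Matrix.vecTail]
    field_simp
  have h2 : pay (Afam ε) (pureStrat 2) v = -ε/(3+2*ε) := by
    simp [pay, pureStrat, Afam, hv, Fin.sum_univ_three, Matrix.vecHead, Matrix.vecTail]
    field_simp
  refine symNash_of' _ _ ⟨fun a => by fin_cases a <;> simp [hv] <;> positivity,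
    by simp [hv, Fin.sum_univ_three]; field_simp; ring⟩ fun a => ?_
  fin_cases a
  · exact le_of_eq (h0.trans hV.symm)
  · exact le_of_eq (h1.trans hV.symm)
  · exact le_of_eq (h2.trans hV.symm)

private lemma ne12' (ε : ℝ) (hε : 0 < ε) :
    (![1/(1+ε), ε/(1+ε), 0] : Fin 3 → ℝ) ≠ ![1/(1+ε), 0, ε/(1+ε)] := by
  have hp : (0:ℝ) < 1 + ε := by linarith
  intro h
  have h1 := congrFun h 1
  simp only [Matrix.cons_val_one, Matrix.head_cons] at h1
  change ε/(1+ε) = 0 at h1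
  exact absurd h1 (by positivity)

private lemma ne13' (ε : ℝ) (hε : 0 < ε) :
    (![1/(1+ε), ε/(1+ε), 0] : Fin 3 → ℝ) ≠ ![3/(3+2*ε), ε/(3+2*ε), ε/(3+2*ε)] := by
  have hp : (0:ℝ) < 3 + 2*ε := by linarith
  intro h
  have h2 := congrFun h 2
  simp only [Matrix.cons_val_two, Matrix.tail_cons, Matrix.head_cons] at h2
  exact absurd h2.symm (by positivity)

private lemma ne23' (ε : ℝ) (hε : 0 < ε) :
    (![1/(1+ε), 0, ε/(1+ε)] : Fin 3 → ℝ) ≠ ![3/(3+2*ε), ε/(3+2*ε), ε/(3+2*ε)] := by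
  have hp : (0:ℝ) < 3 + 2*ε := by linarith
  intro h
  have h1 := congrFun h 1
  simp only [Matrix.cons_val_one, Matrix.head_cons] at h1
  change (0:ℝ) = ε/(3+2*ε) at h1
  exact absurd h1.symm (by positivity)

end Statement14Aux

/-- within symmetric bimatrix games on `T = {1,2,3}`, the set of games with a
unique symmetric Nash equilibrium is not open; witness: `A_0` has the pure first strategy as
unique symmetric Nash equilibrium, while for every `ε > 0` the game `A_ε` has at least the
three symmetric Nash equilibria `(1/(1+ε), ε/(1+ε), 0)`, `(1/(1+ε), 0, ε/(1+ε))` and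
`(3/(3+2ε), ε/(3+2ε), ε/(3+2ε))`, which are pairwise distinct. -/


theorem statement14 :
    ¬ IsOpen {A : Fin 3 → Fin 3 → ℝ | ∃! σ : Fin 3 → ℝ, IsSymNash A σ} ∧
    (∀ σ : Fin 3 → ℝ, IsSymNash (Afam 0) σ ↔ σ = pureStrat 0) ∧
    (∀ ε : ℝ, 0 < ε →
      IsSymNash (Afam ε) ![1/(1+ε), ε/(1+ε), 0] ∧
      IsSymNash (Afam ε) ![1/(1+ε), 0, ε/(1+ε)] ∧
      IsSymNash (Afam ε) ![3/(3+2*ε), ε/(3+2*ε), ε/(3+2*ε)] ∧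
      (![1/(1+ε), ε/(1+ε), 0] : Fin 3 → ℝ) ≠ ![1/(1+ε), 0, ε/(1+ε)] ∧
      (![1/(1+ε), ε/(1+ε), 0] : Fin 3 → ℝ) ≠ ![3/(3+2*ε), ε/(3+2*ε), ε/(3+2*ε)] ∧
      (![1/(1+ε), 0, ε/(1+ε)] : Fin 3 → ℝ) ≠ ![3/(3+2*ε), ε/(3+2*ε), ε/(3+2*ε)]) := by
  refine ⟨?_, part2', fun ε hε =>
    ⟨nash1' ε hε, nash2' ε hε, nash3' ε hε, ne12' ε hε, ne13' ε hε, ne23' ε hε⟩⟩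
  intro hO
  have hmem : (0:ℝ) ∈ (fun ε : ℝ => Afam ε) ⁻¹'
      {A : Fin 3 → Fin 3 → ℝ | ∃! σ : Fin 3 → ℝ, IsSymNash A σ} :=
    ⟨pureStrat 0, (part2' _).mpr rfl, fun σ h => (part2' σ).mp h⟩
  obtain ⟨δ, hδ, hball⟩ := Metric.isOpen_iff.mp (hO.preimage contA') 0 hmem
  have hε : 0 < δ/2 := by linarith
  have hmem2 : (δ/2 : ℝ) ∈ (fun ε : ℝ => Afam ε) ⁻¹'
      {A : Fin 3 → Fin 3 → ℝ | ∃! σ : Fin 3 → ℝ, IsSymNash A σ} := by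
    apply hball
    simp only [Metric.mem_ball, Real.dist_eq, sub_zero, abs_of_pos hε]
    linarith
  obtain ⟨σu, -, huniq⟩ := hmem2
  have e1 := huniq _ (nash1' (δ/2) hε)
  have e2 := huniq _ (nash2' (δ/2) hε)
  exact ne12' (δ/2) hε (e1.trans e2.symm)
end
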